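/- For all integers d1, d2 with 2 < d1 < d2, in the game i-MARK({1},{d1,d2}), convergence occurs in at most d1²·d2² + d2 + 1 steps at every starting position n ∈ ℕ. -/

import Mathlib

/-- The minimum excludant of a set of naturals. -/
noncomputable def mex (T : Set ℕ) : ℕ := sInf {k : ℕ | k ∉ T}

/-- The set of followers of position `n` in the game i-MARK(S,D):
`n - s` for `s ∈ S` with `0 < s ≤ n`, and `n / d` for `d ∈ D` with `2 ≤ d`, `0 < n`, `d ∣ n`. -/
def followers (S D : Finset ℕ) (n : ℕ) : Finset ℕ :=
  ((S.filter fun s => 0 < s ∧ s ≤ n).image fun s => n - s) ∪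
  ((D.filter fun d => 2 ≤ d ∧ 0 < n ∧ d ∣ n).image fun d => n / d)

theorem followers_lt {S D : Finset ℕ} {n m : ℕ} (h : m ∈ followers S D n) : m < n := by
  simp only [followers, Finset.mem_union, Finset.mem_image, Finset.mem_filter] at h
  rcases h with ⟨s, ⟨-, hs, hsn⟩, rfl⟩ | ⟨d, ⟨-, hd, hn, -⟩, rfl⟩
  · omega
  · exact Nat.div_lt_self hn (by omega)

/-- The Sprague–Grundy function of i-MARK(S,D). -/
noncomputable def grundy (S D : Finset ℕ) : ℕ → ℕ
  | n => mex ↑((followers S D n).attach.image fun m => grundy S D m.1)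
decreasing_by exact followers_lt m.2

/-- The number of followers of position `n` in i-MARK(S,D) (for positive `S` and `D` with
elements `≥ 2`): `φ(0) = 0` and `φ(n) = #{s ∈ S : s ≤ n} + #{d ∈ D : d ∣ n}` for `n > 0`. -/
def numFollowers (S D : Finset ℕ) (n : ℕ) : ℕ :=
  if n = 0 then 0 else (S.filter fun s => s ≤ n).card + (D.filter fun d => d ∣ n).card

/-- `σ : ℕ → ℕ` is a guess seed for starting position `n` in i-MARK(S,D) if
`σ i ≤ φ(i)` for all `n ≤ i < n + max S` (values of `σ` outside this window are irrelevant). -/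
def IsGuessSeed (S D : Finset ℕ) (n : ℕ) (σ : ℕ → ℕ) : Prop :=
  ∀ i, n ≤ i → i < n + S.sup id → σ i ≤ numFollowers S D i

/-- The guess sequence generated by seed `σ` from starting position `n`: it equals `σ` on
`[n, n + max S)`, and from `n + max S` on it is computed by the mex rule, using guessed values
for subtraction followers and true Grundy values for division followers. -/
noncomputable def guessSeq (S D : Finset ℕ) (n : ℕ) (σ : ℕ → ℕ) : ℕ → ℕ
  | m =>
    if m < n + S.sup id then σ m
    else
      mex ((↑((S.filter fun t => 0 < t ∧ t ≤ m).attach.image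
              fun t => guessSeq S D n σ (m - t.1)) : Set ℕ) ∪
        {g | ∃ d ∈ D, 2 ≤ d ∧ 0 < m ∧ d ∣ m ∧ g = grundy S D (m / d)})
decreasing_by
  have ht := t.2
  simp only [Finset.mem_filter] at ht
  omega

/-- Convergence occurs in `c` steps at starting position `n`: any two guess sequences from `n`
agree on all positions `m` with `n + c ≤ m < n + c + max S`. -/
def ConvergesIn (S D : Finset ℕ) (n c : ℕ) : Prop :=
  ∀ σ σ' : ℕ → ℕ, IsGuessSeed S D n σ → IsGuessSeed S D n σ' →
    ∀ m, n + c ≤ m → m < n + c + S.sup id → guessSeq S D n σ m = guessSeq S D n σ' m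

/-!
Every window of four consecutive positions contains a Grundy zero: among three consecutive
integers one is divisible by neither `d₁` nor `d₂` (two multiples of the same `d ≥ 3` are at
least three apart), and a position without division followers whose predecessor is nonzero has
value `0`. Hence within `4 d₁` steps of `n` there is a multiple `m` of `d₁` with
`𝒢(m / d₁) = 0`, where every guess sequence is nonzero. From two nonzero values the mex rule
sends both sequences to `0` at the next position whose division followers all have nonzero
value, and such a position exists among `m + 1, m + 2`. Once two guess sequences agree they
agree forever, since subtraction only looks one step back.
-/

open Set

variable {d₁ d₂ n : ℕ}

lemma mex_eq_zero_iff {T : Set ℕ} (hT : T.Finite) : mex T = 0 ↔ 0 ∉ T := by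
  rw [mex, Nat.sInf_eq_zero, ← compl_def, mem_compl_iff,
    or_iff_left hT.infinite_compl.nonempty.ne_empty]

lemma exists_not_dvd_of_three_le (h₁ : 3 ≤ d₁) (h₂ : 3 ≤ d₂) (m : ℕ) :
    ∃ i ≤ 2, ¬(d₁ ∣ m + i ∨ d₂ ∣ m + i) := by
  have far : ∀ {d i j}, 3 ≤ d → i < j → j ≤ 2 → d ∣ m + i → ¬d ∣ m + j := by
    intro d i j hd hij hj hi hj'
    have hji : d ∣ j - i := by
      rwa [show m + j = m + i + (j - i) by omega, Nat.dvd_add_right hi] at hj'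
    exact Nat.not_dvd_of_pos_of_lt (by omega) (by omega) hji
  by_contra! h
  rcases h 0 (by norm_num) with h0 | h0 <;> rcases h 1 (by norm_num) with h1 | h1 <;>
    rcases h 2 (by norm_num) with h2 | h2 <;>
    first
    | exact far h₁ zero_lt_one one_le_two h0 h1 | exact far h₂ zero_lt_one one_le_two h0 h1
    | exact far h₁ zero_lt_two le_rfl h0 h2 | exact far h₂ zero_lt_two le_rfl h0 h2
    | exact far h₁ one_lt_two le_rfl h1 h2 | exact far h₂ one_lt_two le_rfl h1 h2

-- Verbatim the division part of the mex in `guessSeq` for `S = {1}`, guards included.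
def divisionValues (d₁ d₂ m : ℕ) : Set ℕ :=
  {g | ∃ d ∈ ({d₁, d₂} : Finset ℕ), 2 ≤ d ∧ 0 < m ∧ d ∣ m ∧ g = grundy {1} {d₁, d₂} (m / d)}

lemma divisionValues_finite (m : ℕ) : (divisionValues d₁ d₂ m).Finite := by
  refine (toFinite {grundy {1} {d₁, d₂} (m / d₁), grundy {1} {d₁, d₂} (m / d₂)}).subset ?_
  rintro _ ⟨d, hd, -, -, -, rfl⟩
  simp only [Finset.mem_insert, Finset.mem_singleton] at hd
  rcases hd with rfl | rfl <;> simp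

lemma divisionValues_eq_empty {m : ℕ} (h : ¬(d₁ ∣ m ∨ d₂ ∣ m)) : divisionValues d₁ d₂ m = ∅ := by
  refine eq_empty_of_forall_notMem ?_
  rintro _ ⟨d, hd, -, -, hdvd, -⟩
  simp only [Finset.mem_insert, Finset.mem_singleton] at hd
  rcases hd with rfl | rfl <;> tauto

lemma zero_mem_divisionValues {m : ℕ} (hd₁ : 2 ≤ d₁) (hm : 0 < m) (hdvd : d₁ ∣ m)
    (hg : grundy {1} {d₁, d₂} (m / d₁) = 0) : 0 ∈ divisionValues d₁ d₂ m :=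
  ⟨d₁, by simp, hd₁, hm, hdvd, hg.symm⟩

def MexRecurrent (d₁ d₂ n : ℕ) (f : ℕ → ℕ) : Prop :=
  ∀ m, n < m → f m = mex ({f (m - 1)} ∪ divisionValues d₁ d₂ m)

lemma grundy_mexRecurrent : MexRecurrent d₁ d₂ 0 (grundy {1} {d₁, d₂}) := by
  intro m hm
  rw [grundy]
  congr 1
  ext x
  simp only [Finset.coe_image, mem_image, Finset.mem_coe, Finset.mem_attach, true_and,
    Subtype.exists, mem_union, mem_singleton_iff, followers, Finset.mem_union, Finset.mem_image,
    Finset.mem_filter, Finset.mem_singleton]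
  constructor
  · rintro ⟨_, ⟨s, ⟨rfl, -, -⟩, rfl⟩ | ⟨d, ⟨hd, h2, h0, hdvd⟩, rfl⟩, rfl⟩
    · exact Or.inl rfl
    · exact Or.inr ⟨d, hd, h2, h0, hdvd, rfl⟩
  · rintro (rfl | ⟨d, hd, h2, h0, hdvd, rfl⟩)
    · exact ⟨m - 1, Or.inl ⟨1, ⟨rfl, zero_lt_one, hm⟩, rfl⟩, rfl⟩
    · exact ⟨m / d, Or.inr ⟨d, ⟨hd, h2, h0, hdvd⟩, rfl⟩, rfl⟩

lemma guessSeq_mexRecurrent (σ : ℕ → ℕ) :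
    MexRecurrent d₁ d₂ n (guessSeq {1} {d₁, d₂} n σ) := by
  intro m hm
  rw [guessSeq, if_neg (by simp only [Finset.sup_singleton, id]; omega)]
  congr 2
  ext x
  simp only [Finset.coe_image, mem_image, Finset.mem_coe, Finset.mem_attach, true_and,
    Subtype.exists, mem_singleton_iff, Finset.mem_filter, Finset.mem_singleton]
  constructor
  · rintro ⟨_, ⟨rfl, -⟩, rfl⟩
    rfl
  · rintro rfl
    exact ⟨1, ⟨rfl, zero_lt_one, by omega⟩, rfl⟩

namespace MexRecurrent

variable {f g : ℕ → ℕ}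

lemma ne_zero (hf : MexRecurrent d₁ d₂ n f) {m : ℕ} (hm : n < m)
    (h0 : 0 ∈ divisionValues d₁ d₂ m) : f m ≠ 0 := by
  rw [hf m hm, Ne, mex_eq_zero_iff ((toFinite _).union (divisionValues_finite m)), not_not]
  exact Or.inr h0

lemma succ_eq_zero_iff (hf : MexRecurrent d₁ d₂ n f) {m : ℕ} (hm : n ≤ m) (hfm : f m ≠ 0) :
    f (m + 1) = 0 ↔ 0 ∉ divisionValues d₁ d₂ (m + 1) := by
  rw [hf (m + 1) (by omega), mex_eq_zero_iff ((toFinite _).union (divisionValues_finite _)),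
    Nat.add_sub_cancel, mem_union, mem_singleton_iff, eq_comm, or_iff_right hfm]

lemma exists_eq_zero (hf : MexRecurrent d₁ d₂ n f) (h₁ : 3 ≤ d₁) (h₂ : 3 ≤ d₂) {q : ℕ}
    (hq : n ≤ q) : ∃ j, q ≤ j ∧ j ≤ q + 3 ∧ f j = 0 := by
  obtain ⟨i, hi, hndvd⟩ := exists_not_dvd_of_three_le h₁ h₂ (q + 1)
  by_cases hprev : f (q + i) = 0
  · exact ⟨q + i, by omega, by omega, hprev⟩
  · refine ⟨q + i + 1, by omega, by omega, (hf.succ_eq_zero_iff (by omega) hprev).mpr ?_⟩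
    rw [show q + i + 1 = q + 1 + i by omega, divisionValues_eq_empty hndvd]
    exact notMem_empty 0

lemma eq_of_le (hf : MexRecurrent d₁ d₂ n f) (hg : MexRecurrent d₁ d₂ n g) {p m : ℕ}
    (hp : n ≤ p) (hpm : p ≤ m) (h : f p = g p) : f m = g m := by
  induction m, hpm using Nat.le_induction with
  | base => exact h
  | succ m hpm ih => rw [hf (m + 1) (by omega), hg (m + 1) (by omega), Nat.add_sub_cancel, ih]

lemma exists_eq_of_ne_zero (hf : MexRecurrent d₁ d₂ n f) (hg : MexRecurrent d₁ d₂ n g)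
    {m : ℕ} (hm : n ≤ m) (hfm : f m ≠ 0) (hgm : g m ≠ 0) (k : ℕ)
    (hk : 0 ∉ divisionValues d₁ d₂ (m + k + 1)) : ∃ p, m < p ∧ p ≤ m + k + 1 ∧ f p = g p := by
  induction k generalizing m with
  | zero =>
    refine ⟨m + 1, by omega, le_rfl, ?_⟩
    rw [(hf.succ_eq_zero_iff hm hfm).mpr hk, (hg.succ_eq_zero_iff hm hgm).mpr hk]
  | succ k ih =>
    by_cases h0 : 0 ∈ divisionValues d₁ d₂ (m + 1)
    · obtain ⟨p, hmp, hpk, hp⟩ := ih (m := m + 1) (by omega) (hf.ne_zero (by omega) h0)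
        (hg.ne_zero (by omega) h0) (by rwa [show m + 1 + k + 1 = m + (k + 1) + 1 by omega])
      exact ⟨p, by omega, by omega, hp⟩
    · refine ⟨m + 1, by omega, by omega, ?_⟩
      rw [(hf.succ_eq_zero_iff hm hfm).mpr h0, (hg.succ_eq_zero_iff hm hgm).mpr h0]

end MexRecurrent

lemma exists_dvd_grundy_div_eq_zero (h₁ : 3 ≤ d₁) (h₂ : 3 ≤ d₂) (n : ℕ) :
    ∃ m, n < m ∧ m ≤ n + 4 * d₁ ∧ d₁ ∣ m ∧ grundy {1} {d₁, d₂} (m / d₁) = 0 := by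
  obtain ⟨j, hj, hj', hzero⟩ :=
    grundy_mexRecurrent.exists_eq_zero h₁ h₂ (Nat.zero_le (n / d₁ + 1))
  refine ⟨d₁ * j, ?_, ?_, dvd_mul_right d₁ j, by rwa [Nat.mul_div_cancel_left j (by omega)]⟩
  · calc n < d₁ * (n / d₁ + 1) := Nat.lt_mul_div_succ n (by omega)
      _ ≤ d₁ * j := Nat.mul_le_mul_left d₁ hj
  · calc d₁ * j ≤ d₁ * (n / d₁) + 4 * d₁ := by nlinarith
      _ ≤ n + 4 * d₁ := by have := Nat.mul_div_le n d₁; omega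

theorem convergesIn_of_le (h₁ : 3 ≤ d₁) (h₂ : 3 ≤ d₂) {c : ℕ} (hc : 4 * d₁ + 2 ≤ c) :
    ConvergesIn {1} {d₁, d₂} n c := by
  intro σ σ' _ _ m hm hm'
  have hf : MexRecurrent d₁ d₂ n (guessSeq {1} {d₁, d₂} n σ) := guessSeq_mexRecurrent σ
  have hg : MexRecurrent d₁ d₂ n (guessSeq {1} {d₁, d₂} n σ') := guessSeq_mexRecurrent σ'
  obtain ⟨m₀, hnm₀, hm₀, hdvd, hzero⟩ := exists_dvd_grundy_div_eq_zero h₁ h₂ n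
  have h0 : 0 ∈ divisionValues d₁ d₂ m₀ := zero_mem_divisionValues (by omega) (by omega) hdvd hzero
  obtain ⟨i, hi, hndvd⟩ := exists_not_dvd_of_three_le h₁ h₂ m₀
  have hi0 : i ≠ 0 := by rintro rfl; exact hndvd (Or.inl hdvd)
  obtain ⟨p, hp, hpm, hfg⟩ := hf.exists_eq_of_ne_zero hg hnm₀.le (hf.ne_zero hnm₀ h0)
    (hg.ne_zero hnm₀ h0) (i - 1) (by
      rw [show m₀ + (i - 1) + 1 = m₀ + i by omega, divisionValues_eq_empty hndvd]
      exact notMem_empty 0)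
  simp only [Finset.sup_singleton, id] at hm'
  exact hf.eq_of_le hg (by omega) (by omega) hfg

/-- In i-MARK({1},{d₁,d₂}) with `2 < d₁ < d₂`, convergence occurs in at most
`d₁²·d₂² + d₂ + 1` steps at every starting position. -/
theorem imark_one_d1_d2_convergence_bound (d₁ d₂ : ℕ) (h₁ : 2 < d₁) (h₂ : d₁ < d₂) (n : ℕ) :
    ∃ c' : ℕ, 1 ≤ c' ∧ c' ≤ d₁ ^ 2 * d₂ ^ 2 + d₂ + 1 ∧ ConvergesIn {1} {d₁, d₂} n c' := by
  refine ⟨4 * d₁ + 2, by omega, ?_, convergesIn_of_le h₁ (by omega) le_rfl⟩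
  have : 9 ≤ d₂ ^ 2 := by nlinarith
  nlinarith
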